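/- Fix Q ∈ (0,1) and set v^Q := F⁻¹(Q) and x^Q(v) := 1 if v ≥ v^Q and 0 otherwise. Then among all nondecreasing measurable functions x : V → [0,1] satisfying ∫_V (1 − x(v))·f(v) dv = Q, the step function x^Q maximizes ∫_V x(v)·φ(v)·f(v) dv, and any other maximizer in this class agrees with x^Q almost everywhere. -/

import Mathlib

/-!
Put `c := φ(v^Q)`. Since `φ` is increasing, `(x^Q(v) - x(v)) (φ(v) - c) ≥ 0` for every
allocation `x` with values in `[0,1]`. Integrating against `f` and using that `x` and `x^Q` have the
same demand `Q`, the `c`-term cancels and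
`∫ x^Q φ f - ∫ x φ f = ∫ (x^Q - x)(φ - c) f ≥ 0`.
Equality forces the nonnegative integrand to vanish a.e.; as `f > 0` and `φ(v) ≠ c` for `v ≠ v^Q`,
this gives `x = x^Q` a.e.
-/

open Set MeasureTheory

/-- The virtual value function `φ(v) = v - (1 - F v) / f v`. -/
noncomputable def phi (F f : ℝ → ℝ) (v : ℝ) : ℝ := v - (1 - F v) / f v

lemma continuousOn_phi {s : Set ℝ} {F f : ℝ → ℝ} (hF : ContinuousOn F s) (hf : ContinuousOn f s)
    (hf0 : ∀ v ∈ s, f v ≠ 0) : ContinuousOn (phi F f) s :=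
  continuousOn_id.sub ((continuousOn_const.sub hF).div hf hf0)

lemma integrableOn_mul_of_mem_Icc {X : Type*} [TopologicalSpace X] [MeasurableSpace X]
    [OpensMeasurableSpace X] [T2Space X] {μ : Measure X} [IsFiniteMeasureOnCompacts μ]
    {s : Set X} (hs : IsCompact s) {x g : X → ℝ} (hx : Measurable x)
    (hx01 : ∀ v ∈ s, x v ∈ Icc (0 : ℝ) 1) (hg : ContinuousOn g s) :
    IntegrableOn (fun v => x v * g v) s μ :=
  (hg.integrableOn_compact hs).bdd_mul (c := 1) hx.aestronglyMeasurable
    (ae_restrict_of_forall_mem hs.measurableSet fun v hv => by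
      rw [Real.norm_eq_abs, abs_le]
      exact ⟨by linarith [(hx01 v hv).1], (hx01 v hv).2⟩)

section Threshold

variable {β : Type*} [LinearOrder β] {s : Set β} {ψ : β → ℝ} {t v : β} {a : ℝ}

lemma threshold_sub_mul_sub_nonneg (hψ : MonotoneOn ψ s) (ht : t ∈ s) (hv : v ∈ s)
    (ha : a ∈ Icc (0 : ℝ) 1) : 0 ≤ ((if t ≤ v then 1 else 0) - a) * (ψ v - ψ t) := by
  split_ifs with htv
  · exact mul_nonneg (by linarith [ha.2]) (sub_nonneg.2 (hψ ht hv htv))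
  · exact mul_nonneg_of_nonpos_of_nonpos (by linarith [ha.1])
      (sub_nonpos.2 (hψ hv ht (le_of_not_ge htv)))

lemma eq_threshold_of_sub_mul_sub_eq_zero (hψ : StrictMonoOn ψ s) (ht : t ∈ s) (hv : v ∈ s)
    (hvt : v ≠ t) (h : ((if t ≤ v then 1 else 0) - a) * (ψ v - ψ t) = 0) :
    a = if t ≤ v then 1 else 0 := by
  have hψvt : ψ v - ψ t ≠ 0 := sub_ne_zero.2 (hψ.injOn.ne hv ht hvt)
  linarith [(mul_eq_zero.1 h).resolve_right hψvt]

end Threshold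

lemma setIntegral_Icc_one_sub_threshold_mul {a b t : ℝ} {F f : ℝ → ℝ} (hat : a ≤ t) (htb : t ≤ b)
    (hF : ∀ v ∈ Icc a t, HasDerivAt F (f v) v) (hf : IntervalIntegrable f volume a t) :
    ∫ v in Icc a b, (1 - if t ≤ v then (1 : ℝ) else 0) * f v = F t - F a := by
  have hind : (fun v => (1 - if t ≤ v then (1 : ℝ) else 0) * f v) = (Iio t).indicator f := by
    ext v
    by_cases htv : t ≤ v
    · simp [htv, not_lt.2 htv]
    · simp [htv, not_le.1 htv]
  have hIco : Icc a b ∩ Iio t = Ico a t :=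
    ext fun v => ⟨fun ⟨⟨hav, _⟩, hvt⟩ => ⟨hav, hvt⟩,
      fun ⟨hav, hvt⟩ => ⟨⟨hav, hvt.le.trans htb⟩, hvt⟩⟩
  rw [hind, setIntegral_indicator measurableSet_Iio, hIco, integral_Ico_eq_integral_Ioc,
    ← intervalIntegral.integral_of_le hat,
    intervalIntegral.integral_eq_sub_of_hasDerivAt (fun v hv => hF v (uIcc_of_le hat ▸ hv)) hf]

lemma sub_mul_sub_mul_eq {α : Type*} (x y ψ w : α → ℝ) (c : ℝ) :
    (fun v => (y v - x v) * (ψ v - c) * w v) = fun v =>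
      (y v * ψ v * w v - x v * ψ v * w v) + c * ((1 - y v) * w v - (1 - x v) * w v) := by
  ext v
  ring

section Exchange

variable {α : Type*} [MeasurableSpace α] {μ : Measure α} {x y ψ w : α → ℝ} {c : ℝ}

lemma integrable_sub_mul_sub_mul (hx : Integrable (fun v => (1 - x v) * w v) μ)
    (hy : Integrable (fun v => (1 - y v) * w v) μ) (hxψ : Integrable (fun v => x v * ψ v * w v) μ)
    (hyψ : Integrable (fun v => y v * ψ v * w v) μ) :
    Integrable (fun v => (y v - x v) * (ψ v - c) * w v) μ := by
  rw [sub_mul_sub_mul_eq]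
  exact (hyψ.sub hxψ).add ((hy.sub hx).const_mul c)

lemma integral_sub_mul_sub_mul (hx : Integrable (fun v => (1 - x v) * w v) μ)
    (hy : Integrable (fun v => (1 - y v) * w v) μ) (hxψ : Integrable (fun v => x v * ψ v * w v) μ)
    (hyψ : Integrable (fun v => y v * ψ v * w v) μ)
    (hdemand : ∫ v, (1 - x v) * w v ∂μ = ∫ v, (1 - y v) * w v ∂μ) :
    ∫ v, (y v - x v) * (ψ v - c) * w v ∂μ =
      ∫ v, y v * ψ v * w v ∂μ - ∫ v, x v * ψ v * w v ∂μ := by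
  have hψdiff : Integrable (fun v => y v * ψ v * w v - x v * ψ v * w v) μ := hyψ.sub hxψ
  have hdiff : Integrable (fun v => c * ((1 - y v) * w v - (1 - x v) * w v)) μ :=
    (hy.sub hx).const_mul c
  rw [sub_mul_sub_mul_eq, integral_add hψdiff hdiff,
    integral_sub hyψ hxψ, integral_const_mul, integral_sub hy hx, hdemand, sub_self, mul_zero,
    add_zero]

lemma integral_mul_mul_le_of_sub_mul_sub_mul_nonneg
    (hx : Integrable (fun v => (1 - x v) * w v) μ)
    (hy : Integrable (fun v => (1 - y v) * w v) μ) (hxψ : Integrable (fun v => x v * ψ v * w v) μ)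
    (hyψ : Integrable (fun v => y v * ψ v * w v) μ)
    (hdemand : ∫ v, (1 - x v) * w v ∂μ = ∫ v, (1 - y v) * w v ∂μ)
    (hnonneg : ∀ᵐ v ∂μ, 0 ≤ (y v - x v) * (ψ v - c) * w v) :
    ∫ v, x v * ψ v * w v ∂μ ≤ ∫ v, y v * ψ v * w v ∂μ := by
  have hgap := integral_nonneg_of_ae hnonneg
  rw [integral_sub_mul_sub_mul hx hy hxψ hyψ hdemand] at hgap
  linarith

lemma sub_mul_sub_mul_ae_eq_zero_of_integral_mul_mul_eq
    (hx : Integrable (fun v => (1 - x v) * w v) μ)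
    (hy : Integrable (fun v => (1 - y v) * w v) μ) (hxψ : Integrable (fun v => x v * ψ v * w v) μ)
    (hyψ : Integrable (fun v => y v * ψ v * w v) μ)
    (hdemand : ∫ v, (1 - x v) * w v ∂μ = ∫ v, (1 - y v) * w v ∂μ)
    (hnonneg : ∀ᵐ v ∂μ, 0 ≤ (y v - x v) * (ψ v - c) * w v)
    (heq : ∫ v, x v * ψ v * w v ∂μ = ∫ v, y v * ψ v * w v ∂μ) :
    (fun v => (y v - x v) * (ψ v - c) * w v) =ᵐ[μ] 0 :=
  (integral_eq_zero_iff_of_nonneg_ae hnonneg (integrable_sub_mul_sub_mul hx hy hxψ hyψ)).1 <| by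
    rw [integral_sub_mul_sub_mul hx hy hxψ hyψ hdemand, heq, sub_self]

end Exchange
theorem stmt_19_general
    (vlo vhi : ℝ)
    (F f : ℝ → ℝ)
    (hFlo : F vlo = 0)
    (hFderiv : ∀ v ∈ Set.Icc vlo vhi, HasDerivAt F (f v) v)
    (hfpos : ∀ v ∈ Set.Icc vlo vhi, 0 < f v)
    (hfdiff : DifferentiableOn ℝ f (Set.Icc vlo vhi))
    (hreg : StrictMonoOn (phi F f) (Set.Icc vlo vhi))
    (Q : ℝ)
    (vQ : ℝ) (hvQ : vQ ∈ Set.Icc vlo vhi) (hFvQ : F vQ = Q) :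
    (∀ x : ℝ → ℝ, Measurable x → (∀ v ∈ Set.Icc vlo vhi, x v ∈ Set.Icc (0:ℝ) 1) →
        MonotoneOn x (Set.Icc vlo vhi) →
        (∫ v in vlo..vhi, (1 - x v) * f v) = Q →
        (∫ v in vlo..vhi, x v * phi F f v * f v) ≤
          ∫ v in vlo..vhi, (if vQ ≤ v then (1:ℝ) else 0) * phi F f v * f v) ∧
      (∀ x : ℝ → ℝ, Measurable x → (∀ v ∈ Set.Icc vlo vhi, x v ∈ Set.Icc (0:ℝ) 1) →
        MonotoneOn x (Set.Icc vlo vhi) →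
        (∫ v in vlo..vhi, (1 - x v) * f v) = Q →
        (∫ v in vlo..vhi, x v * phi F f v * f v) =
          (∫ v in vlo..vhi, (if vQ ≤ v then (1:ℝ) else 0) * phi F f v * f v) →
        ∀ᵐ v ∂(MeasureTheory.volume.restrict (Set.Icc vlo vhi)),
          x v = if vQ ≤ v then (1:ℝ) else 0) := by
  have hle : vlo ≤ vhi := hvQ.1.trans hvQ.2
  have hf : ContinuousOn f (Icc vlo vhi) := hfdiff.continuousOn
  have hφ : ContinuousOn (phi F f) (Icc vlo vhi) :=
    continuousOn_phi (fun v hv => (hFderiv v hv).continuousAt.continuousWithinAt) hf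
      fun v hv => (hfpos v hv).ne'
  have hintegrable : ∀ x : ℝ → ℝ, Measurable x → (∀ v ∈ Icc vlo vhi, x v ∈ Icc (0:ℝ) 1) →
      IntegrableOn (fun v => (1 - x v) * f v) (Icc vlo vhi) ∧
        IntegrableOn (fun v => x v * phi F f v * f v) (Icc vlo vhi) := fun x hx hx01 =>
    ⟨integrableOn_mul_of_mem_Icc isCompact_Icc (measurable_const.sub hx)
        (fun v hv => Icc.mem_iff_one_sub_mem.1 (hx01 v hv)) hf,
      by simpa only [mul_assoc, Pi.mul_apply] using
        integrableOn_mul_of_mem_Icc isCompact_Icc hx hx01 (hφ.mul hf)⟩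
  obtain ⟨hxQ_demand, hxQ_revenue⟩ := hintegrable (fun v => if vQ ≤ v then 1 else 0)
    (measurable_const.ite measurableSet_Ici measurable_const) fun v _ => by split_ifs <;> simp
  have hQdemand : ∫ v in Icc vlo vhi, (1 - if vQ ≤ v then (1:ℝ) else 0) * f v = Q := by
    rw [setIntegral_Icc_one_sub_threshold_mul hvQ.1 hvQ.2
      (fun v hv => hFderiv v ⟨hv.1, hv.2.trans hvQ.2⟩)
      ((hf.mono (Icc_subset_Icc_right hvQ.2)).intervalIntegrable_of_Icc hvQ.1), hFvQ, hFlo,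
      sub_zero]
  have hgap : ∀ x : ℝ → ℝ, (∀ v ∈ Icc vlo vhi, x v ∈ Icc (0:ℝ) 1) →
      ∀ᵐ v ∂volume.restrict (Icc vlo vhi),
        0 ≤ ((if vQ ≤ v then 1 else 0) - x v) * (phi F f v - phi F f vQ) * f v :=
    fun x hx01 => ae_restrict_of_forall_mem measurableSet_Icc fun v hv =>
      mul_nonneg (threshold_sub_mul_sub_nonneg hreg.monotoneOn hvQ hv (hx01 v hv)) (hfpos v hv).le
  simp only [intervalIntegral.integral_of_le hle, ← integral_Icc_eq_integral_Ioc]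
  refine ⟨fun x hx hx01 _ hdemand => ?_, fun x hx hx01 _ hdemand heq => ?_⟩
  · exact integral_mul_mul_le_of_sub_mul_sub_mul_nonneg (hintegrable x hx hx01).1 hxQ_demand
      (hintegrable x hx hx01).2 hxQ_revenue (hdemand.trans hQdemand.symm) (hgap x hx01)
  · filter_upwards [sub_mul_sub_mul_ae_eq_zero_of_integral_mul_mul_eq (hintegrable x hx hx01).1
        hxQ_demand (hintegrable x hx hx01).2 hxQ_revenue (hdemand.trans hQdemand.symm)
        (hgap x hx01) heq,
      ae_restrict_mem measurableSet_Icc, ae_restrict_of_ae (volume.ae_ne vQ)] with v hv0 hv hvQne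
    exact eq_threshold_of_sub_mul_sub_eq_zero hreg hvQ hv hvQne
      ((mul_eq_zero.1 hv0).resolve_right (hfpos v hv).ne')

/-- fix `Q ∈ (0,1)`, let `v^Q = F⁻¹(Q)` and `x^Q = 1_{[v^Q, v̄]}`. Among
all nondecreasing measurable allocation rules `x : V → [0,1]` with induced demand
`∫_V (1 − x(v))·f(v) dv = Q`, the step rule `x^Q` maximizes `∫_V x(v)·φ(v)·f(v) dv`,
and any other maximizer agrees with `x^Q` almost everywhere. -/
theorem stmt_19
    (vlo vhi : ℝ) (hvlo : 0 ≤ vlo) (hlt : vlo < vhi)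
    (F f : ℝ → ℝ) (hFmono : Monotone F)
    (hFlo : F vlo = 0) (hFhi : F vhi = 1)
    (hFderiv : ∀ v ∈ Set.Icc vlo vhi, HasDerivAt F (f v) v)
    (hfpos : ∀ v ∈ Set.Icc vlo vhi, 0 < f v)
    (hfdiff : DifferentiableOn ℝ f (Set.Icc vlo vhi))
    (hreg : StrictMonoOn (phi F f) (Set.Icc vlo vhi))
    (Q : ℝ) (hQ : Q ∈ Set.Ioo (0:ℝ) 1)
    (vQ : ℝ) (hvQ : vQ ∈ Set.Icc vlo vhi) (hFvQ : F vQ = Q) :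
    (∀ x : ℝ → ℝ, Measurable x → (∀ v ∈ Set.Icc vlo vhi, x v ∈ Set.Icc (0:ℝ) 1) →
        MonotoneOn x (Set.Icc vlo vhi) →
        (∫ v in vlo..vhi, (1 - x v) * f v) = Q →
        (∫ v in vlo..vhi, x v * phi F f v * f v) ≤
          ∫ v in vlo..vhi, (if vQ ≤ v then (1:ℝ) else 0) * phi F f v * f v) ∧
      (∀ x : ℝ → ℝ, Measurable x → (∀ v ∈ Set.Icc vlo vhi, x v ∈ Set.Icc (0:ℝ) 1) →
        MonotoneOn x (Set.Icc vlo vhi) →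
        (∫ v in vlo..vhi, (1 - x v) * f v) = Q →
        (∫ v in vlo..vhi, x v * phi F f v * f v) =
          (∫ v in vlo..vhi, (if vQ ≤ v then (1:ℝ) else 0) * phi F f v * f v) →
        ∀ᵐ v ∂(MeasureTheory.volume.restrict (Set.Icc vlo vhi)),
          x v = if vQ ≤ v then (1:ℝ) else 0) :=
  stmt_19_general vlo vhi F f hFlo hFderiv hfpos hfdiff hreg Q vQ hvQ hFvQ
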